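/- Let L be a well-filtered dcpo. The map φ : H(Q(L)) → Q(H(L)) defined by φ(𝒜) = { A ∈ H(L) : A ∩ K ≠ ∅ for all K ∈ 𝒜 } is well-defined, i.e., φ(𝒜) is a nonempty Scott compact saturated subset of the complete lattice H(L). -/

import Mathlib

universe u

/-- A subset is Scott open: an upper set inaccessible by directed suprema. -/
def ScottOpen {α : Type u} [Preorder α] (U : Set α) : Prop :=
  IsUpperSet U ∧ ∀ d : Set α, d.Nonempty → DirectedOn (· ≤ ·) d →
    ∀ a : α, IsLUB d a → a ∈ U → (d ∩ U).Nonempty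

/-- A subset is Scott closed: a lower set closed under directed suprema. -/
def ScottClosed {α : Type u} [Preorder α] (C : Set α) : Prop :=
  IsLowerSet C ∧ ∀ d : Set α, d ⊆ C → d.Nonempty → DirectedOn (· ≤ ·) d →
    ∀ a : α, IsLUB d a → a ∈ C

/-- A dcpo: every nonempty directed subset has a supremum. -/
def IsDcpo (α : Type u) [Preorder α] : Prop :=
  ∀ d : Set α, d.Nonempty → DirectedOn (· ≤ ·) d → ∃ a, IsLUB d a

/-- Compactness with respect to the Scott topology. -/
def ScottCompact {α : Type u} [Preorder α] (K : Set α) : Prop :=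
  ∀ 𝒰 : Set (Set α), (∀ U ∈ 𝒰, ScottOpen U) → K ⊆ ⋃₀ 𝒰 →
    ∃ F : Set (Set α), F ⊆ 𝒰 ∧ F.Finite ∧ K ⊆ ⋃₀ F

/-- Well-filteredness of the Scott topology of a poset. -/
def WellFiltered (α : Type u) [Preorder α] : Prop :=
  ∀ 𝒞 : Set (Set α), 𝒞.Nonempty →
    (∀ K ∈ 𝒞, ScottCompact K ∧ IsUpperSet K) →
    DirectedOn (fun A B : Set α => B ⊆ A) 𝒞 →
    ∀ U : Set α, ScottOpen U → ⋂₀ 𝒞 ⊆ U → ∃ K ∈ 𝒞, K ⊆ U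

/-- The Hoare power construction: Scott closed subsets ordered by inclusion. -/
structure HPoset (α : Type u) [Preorder α] where
  carrier : Set α
  closed' : ScottClosed carrier

instance {α : Type u} [Preorder α] : PartialOrder (HPoset α) where
  le A B := A.carrier ⊆ B.carrier
  le_refl _ := subset_rfl
  le_trans _ _ _ h h' := Set.Subset.trans h h'
  le_antisymm A B h h' := by
    cases A; cases B
    simp only [HPoset.mk.injEq]
    exact subset_antisymm h h'

/-- The Smyth power construction: nonempty Scott compact saturated subsets
ordered by reverse inclusion. -/
structure QPoset (α : Type u) [Preorder α] where
  carrier : Set α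
  nonempty' : carrier.Nonempty
  compact' : ScottCompact carrier
  upper' : IsUpperSet carrier

instance {α : Type u} [Preorder α] : PartialOrder (QPoset α) where
  le K K' := K'.carrier ⊆ K.carrier
  le_refl _ := subset_rfl
  le_trans _ _ _ h h' := Set.Subset.trans h' h
  le_antisymm K K' h h' := by
    cases K; cases K'
    simp only [QPoset.mk.injEq]
    exact subset_antisymm h' h

/-- The lattice of Scott open subsets ordered by inclusion. -/
structure OpenSet (α : Type u) [Preorder α] where
  carrier : Set α
  open' : ScottOpen carrier

instance {α : Type u} [Preorder α] : PartialOrder (OpenSet α) where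
  le A B := A.carrier ⊆ B.carrier
  le_refl _ := subset_rfl
  le_trans _ _ _ h h' := Set.Subset.trans h h'
  le_antisymm A B h h' := by
    cases A; cases B
    simp only [OpenSet.mk.injEq]
    exact subset_antisymm h h'

/-- The map φ : H(Q(L)) → Q(H(L)) on underlying subsets. -/
def phiMap {L : Type u} [Preorder L] (𝒜 : Set (QPoset L)) : Set (HPoset L) :=
  {A : HPoset L | ∀ K ∈ 𝒜, (A.carrier ∩ K.carrier).Nonempty}

/-- The map ψ : Q(H(L)) → H(Q(L)) on underlying subsets. -/
def psiMap {L : Type u} [Preorder L] (𝒦 : Set (HPoset L)) : Set (QPoset L) :=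
  {K : QPoset L | ∀ A ∈ 𝒦, (K.carrier ∩ A.carrier).Nonempty}

/-!
`phiMap 𝒜` is the intersection of the sets `◇K = {A | A ∩ K ≠ ∅} = ↑{↓x | x ∈ K}`, `K ∈ 𝒜`, and
each `◇K` is compact as the upper closure of the image of `K` under the Scott continuous map
`x ↦ ↓x`. In the Scott topology of a sup-semilattice every translation `b ↦ a ⊔ b` is continuous.
A tube-lemma argument then makes the intersection of two compact upper sets compact. In a dcpo,
a minimal closed set meeting every member of a filtered family of compact upper sets is closed
under `⊔`, hence directed, so it contains its supremum, which lies in every member of the family: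
this is well-filteredness (Xi–Lawson). As `H(L)` is a complete lattice, well-filteredness and
coherence make the intersection of all the `◇K` compact.
-/

open Set Topology

section ScottTopology

variable {α : Type u} [Preorder α] [TopologicalSpace α] [IsScott α univ]

theorem scottOpen_iff_isOpen {U : Set α} : ScottOpen U ↔ IsOpen U := by
  rw [IsScott.isOpen_iff_isUpperSet_and_dirSupInaccOn (D := univ), dirSupInaccOn_univ]
  rfl

theorem scottClosed_iff_isClosed {C : Set α} : ScottClosed C ↔ IsClosed C := by
  rw [IsScott.isClosed_iff_isLowerSet_and_dirSupClosed]
  rfl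

theorem scottCompact_iff_isCompact {K : Set α} : ScottCompact K ↔ IsCompact K := by
  refine ⟨fun hK => isCompact_generateFrom
    (TopologicalSpace.generateFrom_setOfPred_isOpen _).symm fun 𝒰 h𝒰 hcov =>
      hK 𝒰 (fun U hU => scottOpen_iff_isOpen.2 (h𝒰 hU)) hcov, fun hK 𝒰 h𝒰 hcov => ?_⟩
  rw [sUnion_eq_biUnion] at hcov
  obtain ⟨F, hF𝒰, hF, hKF⟩ :=
    hK.elim_finite_subcover_image (fun U hU => scottOpen_iff_isOpen.1 (h𝒰 U hU)) hcov
  exact ⟨F, hF𝒰, hF, sUnion_eq_biUnion ▸ hKF⟩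

theorem IsCompact.upperClosure {K : Set α} (hK : IsCompact K) :
    IsCompact (upperClosure K : Set α) :=
  isCompact_of_finite_subcover fun U hU hcov =>
    let ⟨t, ht⟩ := hK.elim_finite_subcover U hU (subset_upperClosure.trans hcov)
    ⟨t, upperClosure_min ht
      (IsScott.isUpperSet_of_isOpen (D := univ) (isOpen_biUnion fun i _ => hU i))⟩

theorem isCompact_univ_of_orderBot [OrderBot α] : IsCompact (univ : Set α) := by
  simpa using (isCompact_singleton (x := (⊥ : α))).upperClosure

end ScottTopology

theorem IsCompact.inter_iInter_nonempty_of_directed {X ι : Type*} [TopologicalSpace X]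
    [Nonempty ι] {Q : Set X} (hQ : IsCompact Q) {t : ι → Set X} (ht : ∀ i, IsClosed (t i))
    (hdir : Directed (· ⊇ ·) t) (hmeet : ∀ i, (Q ∩ t i).Nonempty) :
    (Q ∩ ⋂ i, t i).Nonempty := by
  by_contra h
  obtain ⟨i, hi⟩ := hQ.elim_directed_family_closed t ht (not_nonempty_iff_eq_empty.1 h) hdir
  exact (hmeet i).ne_empty hi

theorem exists_minimal_isClosed_inter_nonempty {X : Type*} [TopologicalSpace X]
    {𝒞 : Set (Set X)} (h𝒞 : ∀ Q ∈ 𝒞, IsCompact Q) {C : Set X} (hC : IsClosed C)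
    (hmeet : ∀ Q ∈ 𝒞, (C ∩ Q).Nonempty) :
    ∃ M ⊆ C, Minimal (fun M => IsClosed M ∧ ∀ Q ∈ 𝒞, (M ∩ Q).Nonempty) M := by
  refine zorn_superset_nonempty {M | IsClosed M ∧ ∀ Q ∈ 𝒞, (M ∩ Q).Nonempty}
    (fun c hc hchain hne => ⟨⋂₀ c, ⟨isClosed_sInter fun M hM => (hc hM).1, fun Q hQ => ?_⟩,
      fun M hM => sInter_subset_of_mem hM⟩) C ⟨hC, hmeet⟩
  have := hne.to_subtype
  rw [sInter_eq_iInter, inter_comm]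
  exact (h𝒞 Q hQ).inter_iInter_nonempty_of_directed (fun M => (hc M.2).1)
    (fun M N => (hchain.total M.2 N.2).elim (fun h => ⟨M, subset_rfl, h⟩)
      fun h => ⟨N, h, subset_rfl⟩)
    fun M => inter_comm Q M ▸ (hc M.2).2 Q hQ

theorem Minimal.subset_closure_inter {X : Type*} [TopologicalSpace X] {𝒞 : Set (Set X)}
    {M : Set X} (hM : Minimal (fun M => IsClosed M ∧ ∀ Q ∈ 𝒞, (M ∩ Q).Nonempty) M)
    (hdir : DirectedOn (· ⊇ ·) 𝒞) {Q : Set X} (hQ : Q ∈ 𝒞) : M ⊆ closure (M ∩ Q) := by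
  refine hM.2 ⟨isClosed_closure, fun Q' hQ' => ?_⟩ (closure_minimal inter_subset_left hM.1.1)
  obtain ⟨Q'', hQ'', hQQ'', hQ'Q''⟩ := hdir Q hQ Q' hQ'
  obtain ⟨m, hmM, hmQ''⟩ := hM.1.2 Q'' hQ''
  exact ⟨m, subset_closure ⟨hmM, hQQ'' hmQ''⟩, hQ'Q'' hmQ''⟩

section SemilatticeSup

variable {α : Type u} [SemilatticeSup α] [TopologicalSpace α] [IsScott α univ]

theorem continuous_sup_left (a : α) : Continuous (a ⊔ ·) :=
  (IsScott.scottContinuousOn_iff_continuous (D := univ) (by simp)).1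
    (by rw [scottContinuousOn_univ]; fun_prop)

theorem continuous_sup_right (a : α) : Continuous (· ⊔ a) := by
  simpa only [sup_comm] using continuous_sup_left a

theorem isOpen_setOf_forall_sup_mem {M U : Set α} (hM : IsCompact M) (hU : IsOpen U) :
    IsOpen {a | ∀ y ∈ M, a ⊔ y ∈ U} := by
  have hUup := IsScott.isUpperSet_of_isOpen (D := univ) hU
  rw [← scottOpen_iff_isOpen]
  refine ⟨fun a b hab ha y hy => hUup (sup_le_sup_right hab y) (ha y hy), ?_⟩
  intro d hd hdir b hb hbU
  have := hd.to_subtype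
  have hcover : M ⊆ ⋃ c : d, (c.1 ⊔ ·) ⁻¹' U := fun y hy => by
    obtain ⟨c, hcd, hcU⟩ := (scottOpen_iff_isOpen.2 (hU.preimage (continuous_sup_right y))).2
      d hd hdir b hb (hbU y hy)
    exact mem_iUnion.2 ⟨⟨c, hcd⟩, hcU⟩
  obtain ⟨c, hc⟩ := hM.elim_directed_cover (fun c : d => (c.1 ⊔ ·) ⁻¹' U)
    (fun c => hU.preimage (continuous_sup_left c.1)) hcover fun c c' => by
      obtain ⟨e, he, hce, hc'e⟩ := hdir c c.2 c' c'.2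
      exact ⟨⟨e, he⟩, fun y hy => hUup (sup_le_sup_right hce y) hy,
        fun y hy => hUup (sup_le_sup_right hc'e y) hy⟩
  exact ⟨c, c.2, hc⟩

theorem IsCompact.inter_of_isUpperSet {Q₁ Q₂ : Set α} (h₁ : IsCompact Q₁) (h₂ : IsCompact Q₂)
    (hu₁ : IsUpperSet Q₁) (hu₂ : IsUpperSet Q₂) : IsCompact (Q₁ ∩ Q₂) := by
  refine isCompact_of_finite_subcover fun {ι} U hU hcover => ?_
  set V : Finset ι → Set α := fun t => {a | ∀ y ∈ Q₂, a ⊔ y ∈ ⋃ i ∈ t, U i}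
  have hsup : ∀ x ∈ Q₁, ∃ t, x ∈ V t := by
    intro x hx
    have himage : (x ⊔ ·) '' Q₂ ⊆ Q₁ ∩ Q₂ := by
      rintro _ ⟨y, hy, rfl⟩
      exact ⟨hu₁ le_sup_left hx, hu₂ le_sup_right hy⟩
    obtain ⟨t, ht⟩ := ((h₂.image (continuous_sup_left x)).elim_finite_subcover U hU
      (himage.trans hcover))
    exact ⟨t, fun y hy => ht (mem_image_of_mem _ hy)⟩
  obtain ⟨t, ht⟩ := h₁.elim_directed_cover V (fun t => isOpen_setOf_forall_sup_mem h₂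
    (isOpen_biUnion fun i _ => hU i)) (fun x hx => mem_iUnion.2 (hsup x hx))
    (directed_of_isDirected_le fun t t' htt' a ha y hy =>
      biUnion_subset_biUnion_left htt' (ha y hy))
  refine ⟨t, fun z hz => ?_⟩
  simpa only [sup_idem] using ht hz.1 z hz.2

theorem isClosed_setOf_exists_sup_mem {M Q : Set α} (hM : IsClosed M) (hQ : IsCompact Q) :
    IsClosed {b | ∃ x ∈ M ∩ Q, b ⊔ x ∈ M} := by
  have hMlow := IsScott.isLowerSet_of_isClosed hM
  rw [← scottClosed_iff_isClosed]
  refine ⟨fun b b' hb'b ⟨x, hx, hbx⟩ => ⟨x, hx, hMlow (sup_le_sup_right hb'b x) hbx⟩, ?_⟩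
  intro d hdA hd hdir b hb
  have := hd.to_subtype
  obtain ⟨x, hxQ, hx⟩ := hQ.inter_iInter_nonempty_of_directed
    (t := fun c : d => M ∩ (c.1 ⊔ ·) ⁻¹' M)
    (fun c => hM.inter (hM.preimage (continuous_sup_left c.1)))
    (fun c c' => by
      obtain ⟨e, he, hce, hc'e⟩ := hdir c c.2 c' c'.2
      exact ⟨⟨e, he⟩, fun x hx => ⟨hx.1, hMlow (sup_le_sup_right hce x) hx.2⟩,
        fun x hx => ⟨hx.1, hMlow (sup_le_sup_right hc'e x) hx.2⟩⟩)
    (fun c => by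
      obtain ⟨x, ⟨hxM, hxQ⟩, hcx⟩ := hdA c.2
      exact ⟨x, hxQ, hxM, hcx⟩)
  rw [mem_iInter] at hx
  refine ⟨x, ⟨(hx (Classical.arbitrary d)).1, hxQ⟩, ?_⟩
  exact (scottClosed_iff_isClosed.2 (hM.preimage (continuous_sup_right x))).2 d
    (fun c hc => (hx ⟨c, hc⟩).2) hd hdir b hb

theorem Minimal.sup_mem {𝒞 : Set (Set α)} {M : Set α}
    (hM : Minimal (fun M => IsClosed M ∧ ∀ Q ∈ 𝒞, (M ∩ Q).Nonempty) M)
    (h𝒞 : ∀ Q ∈ 𝒞, IsCompact Q) (hdir : DirectedOn (· ⊇ ·) 𝒞) {a b : α}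
    (ha : a ∈ M) (hb : b ∈ M) : a ⊔ b ∈ M := by
  have hmeet : ∀ Q ∈ 𝒞, ∃ x ∈ M ∩ Q, a ⊔ x ∈ M := by
    intro Q hQ
    have hMQ : M ∩ Q ⊆ {b | ∃ x ∈ M ∩ Q, b ⊔ x ∈ M} := fun x hx =>
      ⟨x, hx, by rw [sup_idem]; exact hx.1⟩
    exact closure_minimal hMQ (isClosed_setOf_exists_sup_mem hM.1.1 (h𝒞 Q hQ))
      (hM.subset_closure_inter hdir hQ ha)
  have hsub : M ⊆ M ∩ (a ⊔ ·) ⁻¹' M := hM.2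
    ⟨hM.1.1.inter (hM.1.1.preimage (continuous_sup_left a)), fun Q hQ => by
      obtain ⟨x, ⟨hxM, hxQ⟩, hax⟩ := hmeet Q hQ
      exact ⟨x, ⟨hxM, hax⟩, hxQ⟩⟩ inter_subset_left
  exact (hsub hb).2

end SemilatticeSup

theorem wellFiltered_of_isDcpo {α : Type u} [SemilatticeSup α] (hd : IsDcpo α) :
    WellFiltered α := by
  let _ : TopologicalSpace α := Topology.scott α univ
  have : IsScott α univ := ⟨rfl⟩
  intro 𝒞 h𝒞 hK hdir U hU hsub
  by_contra! hnot
  have hmeet : ∀ Q ∈ 𝒞, (Uᶜ ∩ Q).Nonempty := fun Q hQ =>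
    let ⟨x, hxQ, hxU⟩ := not_subset.1 (hnot Q hQ)
    ⟨x, hxU, hxQ⟩
  have h𝒞c : ∀ Q ∈ 𝒞, IsCompact Q := fun Q hQ => scottCompact_iff_isCompact.1 (hK Q hQ).1
  obtain ⟨M, hMU, hM⟩ := exists_minimal_isClosed_inter_nonempty h𝒞c
    (scottOpen_iff_isOpen.1 hU).isClosed_compl hmeet
  obtain ⟨Q₀, hQ₀⟩ := h𝒞
  have hMne : M.Nonempty := (hM.1.2 Q₀ hQ₀).mono inter_subset_left
  have hMdir : DirectedOn (· ≤ ·) M := fun a ha b hb =>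
    ⟨a ⊔ b, hM.sup_mem h𝒞c hdir ha hb, le_sup_left, le_sup_right⟩
  obtain ⟨s, hs⟩ := hd M hMne hMdir
  have hsM : s ∈ M := IsScott.dirSupClosed_of_isClosed hM.1.1 subset_rfl hMne hMdir hs
  refine hMU hsM (hsub fun Q hQ => ?_)
  obtain ⟨m, hmM, hmQ⟩ := hM.1.2 Q hQ
  exact (hK Q hQ).2 (hs.1 hmM) hmQ

section OrderBot

variable {α : Type u} [SemilatticeSup α] [OrderBot α] [TopologicalSpace α] [IsScott α univ]

theorem Set.Finite.isCompact_sInter_of_isUpperSet {𝒬 : Set (Set α)} (h𝒬 : 𝒬.Finite)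
    (hQ : ∀ Q ∈ 𝒬, IsCompact Q ∧ IsUpperSet Q) : IsCompact (⋂₀ 𝒬) := by
  induction 𝒬, h𝒬 using Set.Finite.induction_on with
  | empty => simpa using isCompact_univ_of_orderBot
  | @insert Q 𝒬 _ _ ih =>
    rw [sInter_insert]
    obtain ⟨hQc, hQu⟩ := hQ Q (mem_insert Q 𝒬)
    have h𝒬 : ∀ Q' ∈ 𝒬, IsCompact Q' ∧ IsUpperSet Q' := fun Q' hQ' =>
      hQ Q' (mem_insert_of_mem Q hQ')
    exact hQc.inter_of_isUpperSet (ih h𝒬) hQu (isUpperSet_sInter fun Q' hQ' => (h𝒬 Q' hQ').2)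

theorem isCompact_sInter_of_isUpperSet (hd : IsDcpo α) {𝒬 : Set (Set α)}
    (hQ : ∀ Q ∈ 𝒬, IsCompact Q ∧ IsUpperSet Q) : IsCompact (⋂₀ 𝒬) := by
  set 𝒞 := (fun F => ⋂₀ F) '' {F | F ⊆ 𝒬 ∧ F.Finite}
  have h𝒞 : ∀ C ∈ 𝒞, IsCompact C ∧ IsUpperSet C := by
    rintro _ ⟨F, ⟨hF𝒬, hF⟩, rfl⟩
    exact ⟨hF.isCompact_sInter_of_isUpperSet fun Q hQF => hQ Q (hF𝒬 hQF),
      isUpperSet_sInter fun Q hQF => (hQ Q (hF𝒬 hQF)).2⟩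
  have hdir : DirectedOn (· ⊇ ·) 𝒞 := by
    rintro _ ⟨F, ⟨hF𝒬, hF⟩, rfl⟩ _ ⟨G, ⟨hG𝒬, hG⟩, rfl⟩
    exact ⟨_, mem_image_of_mem _ ⟨union_subset hF𝒬 hG𝒬, hF.union hG⟩,
      sInter_subset_sInter subset_union_left, sInter_subset_sInter subset_union_right⟩
  have h𝒬𝒞 : ∀ C ∈ 𝒞, ⋂₀ 𝒬 ⊆ C := by
    rintro _ ⟨F, ⟨hF𝒬, -⟩, rfl⟩
    exact sInter_subset_sInter hF𝒬
  have h𝒞𝒬 : ⋂₀ 𝒞 ⊆ ⋂₀ 𝒬 := fun x hx Q hQ => by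
    simpa using hx _ (mem_image_of_mem _ ⟨singleton_subset_iff.2 hQ, finite_singleton Q⟩)
  rw [← scottCompact_iff_isCompact]
  intro 𝒰 h𝒰 hcover
  have h𝒰open : ScottOpen (⋃₀ 𝒰) :=
    scottOpen_iff_isOpen.2 (isOpen_sUnion fun U hU => scottOpen_iff_isOpen.1 (h𝒰 U hU))
  obtain ⟨C, hC, hCU⟩ := wellFiltered_of_isDcpo hd 𝒞
    ⟨_, mem_image_of_mem _ ⟨empty_subset 𝒬, finite_empty⟩⟩
    (fun C hC => ⟨scottCompact_iff_isCompact.2 (h𝒞 C hC).1, (h𝒞 C hC).2⟩) hdir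
    (⋃₀ 𝒰) h𝒰open (h𝒞𝒬.trans hcover)
  obtain ⟨G, hG𝒰, hG, hCG⟩ := scottCompact_iff_isCompact.2 (h𝒞 C hC).1 𝒰 h𝒰 hCU
  exact ⟨G, hG𝒰, hG, (h𝒬𝒞 C hC).trans hCG⟩

end OrderBot

namespace HPoset

variable {L : Type u} [Preorder L]

instance : TopologicalSpace (HPoset L) := Topology.scott (HPoset L) univ

instance : IsScott (HPoset L) univ := ⟨rfl⟩

instance : InfSet (HPoset L) where
  sInf S := ⟨⋂ A ∈ S, A.carrier, isLowerSet_iInter₂ fun A _ => A.closed'.1,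
    fun d hd hne hdir a ha =>
      mem_iInter₂.2 fun A hA => A.closed'.2 d (hd.trans (biInter_subset_of_mem hA)) hne hdir a ha⟩

instance : CompleteLattice (HPoset L) :=
  completeLatticeOfInf (HPoset L) fun _ =>
    ⟨fun _ hA => biInter_subset_of_mem hA, fun _ hB => subset_iInter₂ fun _ hA => hB hA⟩

theorem isDcpo : IsDcpo (HPoset L) := fun d _ _ => ⟨sSup d, isLUB_sSup d⟩

def principal (x : L) : HPoset L := ⟨Iic x, isLowerSet_Iic x, fun _ hd _ _ _ ha => ha.2 hd⟩

theorem scottContinuous_principal : ScottContinuous (principal : L → HPoset L) := by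
  refine fun d hne hdir a ha => ⟨?_, fun C hC => ?_⟩
  · rintro _ ⟨x, hx, rfl⟩
    exact Iic_subset_Iic.2 (ha.1 hx)
  · have haC : a ∈ C.carrier :=
      C.closed'.2 d (fun x hx => hC (mem_image_of_mem _ hx) le_rfl) hne hdir a ha
    exact fun y hy => C.closed'.1 hy haC

def meeting (K : Set L) : Set (HPoset L) := {A | (A.carrier ∩ K).Nonempty}

theorem isUpperSet_meeting (K : Set L) : IsUpperSet (meeting K) :=
  fun _ _ hAB hA => hA.mono (inter_subset_inter_left _ hAB)

theorem top_mem_meeting {K : Set L} (hK : K.Nonempty) : ⊤ ∈ meeting K :=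
  let ⟨x, hx⟩ := hK
  ⟨x, (le_top : principal x ≤ ⊤) le_rfl, hx⟩

theorem meeting_eq_upperClosure (K : Set L) :
    meeting K = upperClosure (principal '' K) := by
  ext A
  simp only [meeting, mem_ofPred_eq, SetLike.mem_coe, mem_upperClosure, mem_image,
    exists_exists_and_eq_and]
  refine ⟨fun ⟨x, hxA, hxK⟩ => ⟨x, hxK, fun _ hy => A.closed'.1 hy hxA⟩,
    fun ⟨x, hxK, hxA⟩ => ⟨x, hxA le_rfl, hxK⟩⟩

theorem isCompact_meeting {K : Set L} (hK : ScottCompact K) : IsCompact (meeting K) := by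
  have hcont : Continuous fun x : WithScott L => principal (WithScott.ofScott x) :=
    (IsScott.scottContinuousOn_iff_continuous (β := HPoset L) (D := univ) (by simp)).1
      (scottContinuousOn_univ.2 scottContinuous_principal)
  rw [meeting_eq_upperClosure]
  exact ((scottCompact_iff_isCompact (α := WithScott L)).1 hK |>.image hcont).upperClosure

theorem phiMap_eq_sInter (𝒜 : Set (QPoset L)) :
    phiMap 𝒜 = ⋂₀ ((fun K : QPoset L => meeting K.carrier) '' 𝒜) := by
  ext A
  simp [phiMap, meeting]

end HPoset

theorem phi_well_defined_general {L : Type u} [PartialOrder L] (𝒜 : Set (QPoset L)) :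
    (phiMap 𝒜).Nonempty ∧ ScottCompact (phiMap 𝒜) ∧ IsUpperSet (phiMap 𝒜) := by
  have hmeet : ∀ Q ∈ (fun K : QPoset L => HPoset.meeting K.carrier) '' 𝒜,
      IsCompact Q ∧ IsUpperSet Q := by
    rintro _ ⟨K, -, rfl⟩
    exact ⟨HPoset.isCompact_meeting K.compact', HPoset.isUpperSet_meeting _⟩
  rw [HPoset.phiMap_eq_sInter, scottCompact_iff_isCompact]
  refine ⟨⟨⊤, ?_⟩, isCompact_sInter_of_isUpperSet HPoset.isDcpo hmeet,
    isUpperSet_sInter fun Q hQ => (hmeet Q hQ).2⟩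
  rintro _ ⟨K, -, rfl⟩
  exact HPoset.top_mem_meeting K.nonempty'

theorem phi_well_defined {L : Type u} [PartialOrder L] (hd : IsDcpo L)
    (hw : WellFiltered L) (𝒜 : Set (QPoset L)) (h𝒜 : ScottClosed 𝒜) :
    (phiMap 𝒜).Nonempty ∧ ScottCompact (phiMap 𝒜) ∧ IsUpperSet (phiMap 𝒜) :=
  phi_well_defined_general 𝒜
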